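/- Let B be an invertible upper triangular real m×m matrix with positive diagonal entries and C = B^T B. Then for any positive definite real symmetric m×m matrix A and κ ∈ ℝ^m, q_κ(B^{-T} A B^{-1}) = q_κ(A)/q_κ(C) = q_{-κ}(C)·q_κ(A). -/

import Mathlib

/-!
For upper triangular `U` the leading `p × p` block of `Uᵀ X U` is `U_pᵀ X_p U_p`, so every leading
minor of `X` is multiplied by the square of the corresponding leading minor of `U`. Taking `U = B⁻¹`
(upper triangular, with leading minors inverse to those of `B`) and `U = B`, `X = 1`, each leading
minor of `B⁻ᵀ A B⁻¹` is that of `A` divided by that of `C = BᵀB`; since `q_κ` is a product of real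
powers of leading minors, all of them positive here, `q_κ` turns this quotient into `q_κ(A) / q_κ(C)`.
-/

open MeasureTheory Matrix BigOperators Real

noncomputable section

/-- Determinant of the leading `p × p` principal submatrix. -/
def leadDet {m : ℕ} (A : Matrix (Fin m) (Fin m) ℝ) (p : ℕ) (h : p ≤ m) : ℝ :=
  (A.submatrix (fun i : Fin p => Fin.castLE h i) (fun i : Fin p => Fin.castLE h i)).det

/-- Generalized power `q_κ(A) = |A_m|^{k_m} ∏_{i<m} |A_i|^{k_i - k_{i+1}}`. -/
def qpow {m : ℕ} (κ : Fin m → ℝ) (A : Matrix (Fin m) (Fin m) ℝ) : ℝ :=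
  ∏ i : Fin m, leadDet A ((i : ℕ) + 1) i.isLt ^
    (κ i - if h : (i : ℕ) + 1 < m then κ ⟨(i : ℕ) + 1, h⟩ else 0)

theorem Matrix.submatrix_castLE_mul_of_blockTriangular {R : Type*} [NonUnitalNonAssocSemiring R]
    {m p : ℕ} (h : p ≤ m) (X Y : Matrix (Fin m) (Fin m) R) (hY : Y.BlockTriangular id) :
    (X * Y).submatrix (Fin.castLE h) (Fin.castLE h) =
      X.submatrix (Fin.castLE h) (Fin.castLE h) * Y.submatrix (Fin.castLE h) (Fin.castLE h) := by
  ext i j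
  refine (Fintype.sum_of_injective _ (Fin.castLE_injective h) _ _ (fun k hk => ?_)
    fun _ => rfl).symm
  have hpk : p ≤ k := by
    by_contra! hkp
    exact hk ⟨⟨k, hkp⟩, rfl⟩
  have hjk : Fin.castLE h j < k := by
    rw [Fin.lt_def, Fin.val_castLE]
    exact j.isLt.trans_le hpk
  exact mul_eq_zero_of_right _ (hY hjk)

section leadDet

variable {m : ℕ}

theorem leadDet_transpose (A : Matrix (Fin m) (Fin m) ℝ) (p : ℕ) (h : p ≤ m) :
    leadDet Aᵀ p h = leadDet A p h := by
  rw [leadDet, leadDet, ← transpose_submatrix, det_transpose]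

theorem leadDet_one (p : ℕ) (h : p ≤ m) : leadDet (1 : Matrix (Fin m) (Fin m) ℝ) p h = 1 := by
  rw [leadDet, submatrix_one _ (Fin.castLE_injective h), det_one]

theorem leadDet_mul_of_blockTriangular (X U : Matrix (Fin m) (Fin m) ℝ)
    (hU : U.BlockTriangular id) (p : ℕ) (h : p ≤ m) :
    leadDet (X * U) p h = leadDet X p h * leadDet U p h := by
  rw [leadDet, submatrix_castLE_mul_of_blockTriangular h X U hU, det_mul]; rfl

theorem leadDet_transpose_mul_mul_of_blockTriangular (X U : Matrix (Fin m) (Fin m) ℝ)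
    (hU : U.BlockTriangular id) (p : ℕ) (h : p ≤ m) :
    leadDet (Uᵀ * X * U) p h = leadDet U p h ^ 2 * leadDet X p h := by
  have hUX : leadDet (Uᵀ * X) p h = leadDet X p h * leadDet U p h := by
    rw [← leadDet_transpose, transpose_mul, transpose_transpose,
      leadDet_mul_of_blockTriangular _ _ hU, leadDet_transpose]
  rw [leadDet_mul_of_blockTriangular _ _ hU, hUX]
  ring

theorem leadDet_mul_leadDet_inv_of_blockTriangular {U : Matrix (Fin m) (Fin m) ℝ}
    (hU : U.BlockTriangular id) (hdet : IsUnit U.det) (p : ℕ) (h : p ≤ m) :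
    leadDet U p h * leadDet U⁻¹ p h = 1 := by
  have := U.invertibleOfIsUnitDet hdet
  rw [← leadDet_mul_of_blockTriangular _ _ (blockTriangular_inv_of_blockTriangular hU),
    mul_nonsing_inv U hdet, leadDet_one]

theorem leadDet_pos_of_posDef {A : Matrix (Fin m) (Fin m) ℝ} (hA : A.PosDef) (p : ℕ)
    (h : p ≤ m) : 0 < leadDet A p h :=
  (hA.submatrix (Fin.castLE_injective h)).det_pos

theorem leadDet_transpose_mul_self_pos_of_blockTriangular {B : Matrix (Fin m) (Fin m) ℝ}
    (hB : B.BlockTriangular id) (hdet : IsUnit B.det) (p : ℕ) (h : p ≤ m) :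
    0 < leadDet (Bᵀ * B) p h := by
  have hB_ne : leadDet B p h ≠ 0 :=
    left_ne_zero_of_mul_eq_one (leadDet_mul_leadDet_inv_of_blockTriangular hB hdet p h)
  rw [← Matrix.mul_one Bᵀ, leadDet_transpose_mul_mul_of_blockTriangular _ _ hB, leadDet_one,
    mul_one]
  positivity

theorem leadDet_transpose_inv_mul_mul_inv_of_blockTriangular (A : Matrix (Fin m) (Fin m) ℝ)
    {B : Matrix (Fin m) (Fin m) ℝ} (hB : B.BlockTriangular id) (hdet : IsUnit B.det) (p : ℕ)
    (h : p ≤ m) :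
    leadDet (Bᵀ⁻¹ * A * B⁻¹) p h = leadDet A p h / leadDet (Bᵀ * B) p h := by
  have := B.invertibleOfIsUnitDet hdet
  have hB_inv : leadDet B⁻¹ p h = (leadDet B p h)⁻¹ :=
    eq_inv_of_mul_eq_one_right (leadDet_mul_leadDet_inv_of_blockTriangular hB hdet p h)
  rw [← transpose_nonsing_inv, leadDet_transpose_mul_mul_of_blockTriangular _ _
      (blockTriangular_inv_of_blockTriangular hB), ← Matrix.mul_one Bᵀ,
    leadDet_transpose_mul_mul_of_blockTriangular _ _ hB, leadDet_one, hB_inv]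
  ring

end leadDet

section qpow

variable {m : ℕ} {κ : Fin m → ℝ}

theorem qpow_eq_div_of_leadDet_eq_div {X A C : Matrix (Fin m) (Fin m) ℝ}
    (hX : ∀ p h, leadDet X p h = leadDet A p h / leadDet C p h)
    (hA : ∀ p h, 0 ≤ leadDet A p h) (hC : ∀ p h, 0 ≤ leadDet C p h) :
    qpow κ X = qpow κ A / qpow κ C := by
  rw [qpow, qpow, qpow, ← Finset.prod_div_distrib]
  exact Finset.prod_congr rfl fun i _ => by rw [hX, div_rpow (hA _ _) (hC _ _)]

theorem qpow_neg {C : Matrix (Fin m) (Fin m) ℝ} (hC : ∀ p h, 0 ≤ leadDet C p h) :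
    qpow (-κ) C = (qpow κ C)⁻¹ := by
  rw [qpow, qpow, ← Finset.prod_inv_distrib]
  refine Finset.prod_congr rfl fun i _ => ?_
  rw [← rpow_neg (hC _ _)]
  congr 1
  split_ifs <;> simp only [Pi.neg_apply] <;> ring

end qpow

theorem qpow_conj_inv_general {m : ℕ} (κ : Fin m → ℝ)
    (A B : Matrix (Fin m) (Fin m) ℝ)
    (hA : A.PosDef) (hB : B.BlockTriangular id)
    (hBinv : IsUnit B.det) :
    qpow κ (Bᵀ⁻¹ * A * B⁻¹) = qpow κ A / qpow κ (Bᵀ * B) ∧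
      qpow κ (Bᵀ⁻¹ * A * B⁻¹) = qpow (-κ) (Bᵀ * B) * qpow κ A := by
  have hC : ∀ p h, 0 ≤ leadDet (Bᵀ * B) p h := fun p h =>
    (leadDet_transpose_mul_self_pos_of_blockTriangular hB hBinv p h).le
  have hq : qpow κ (Bᵀ⁻¹ * A * B⁻¹) = qpow κ A / qpow κ (Bᵀ * B) :=
    qpow_eq_div_of_leadDet_eq_div
      (leadDet_transpose_inv_mul_mul_inv_of_blockTriangular A hB hBinv)
      (fun p h => (leadDet_pos_of_posDef hA p h).le) hC
  exact ⟨hq, by rw [hq, qpow_neg hC, div_eq_inv_mul]⟩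

/-- `q_κ(B^{-T} A B^{-1}) = q_κ(A)/q_κ(C) = q_{-κ}(C) q_κ(A)` for
`C = BᵀB`, `B` invertible upper triangular with positive diagonal. -/
theorem qpow_conj_inv {m : ℕ} (κ : Fin m → ℝ)
    (A B : Matrix (Fin m) (Fin m) ℝ)
    (hA : A.PosDef) (hB : B.BlockTriangular id) (hBdiag : ∀ i, 0 < B i i)
    (hBinv : IsUnit B.det) :
    qpow κ (Bᵀ⁻¹ * A * B⁻¹) = qpow κ A / qpow κ (Bᵀ * B) ∧
      qpow κ (Bᵀ⁻¹ * A * B⁻¹) = qpow (-κ) (Bᵀ * B) * qpow κ A :=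
  qpow_conj_inv_general κ A B hA hB hBinv

end
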